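/- Suppose G is connected and satisfies the curvature-dimension inequality CD(m,κ), and f : V → ℝ is a nonconstant harmonic eigenfunction of the Laplacian with nontrivial eigenvalue λ > 0, i.e., −Δf(x) = λ f(x) for all x ∈ V. Then for every vertex x ∈ V, |∇f|²(x) ≤ ((8 − 2/m)λ − 4κ) · max_{z ∈ V} f²(z). -/

import Mathlib

open Finset

/-- The weighted degree `d(x) = Σ_y w(x,y)`. -/
noncomputable def deg {V : Type*} [Fintype V] (w : V → V → ℝ) (x : V) : ℝ :=
  ∑ y, w x y

/-- The graph Laplacian `Δf(x) = (1/d(x)) Σ_y w(x,y) (f(y) − f(x))`. -/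
noncomputable def lap {V : Type*} [Fintype V] (w : V → V → ℝ) (f : V → ℝ) (x : V) : ℝ :=
  (1 / deg w x) * ∑ y, w x y * (f y - f x)

/-- The bilinear operator `Γ(f,g)(x) = (1/2)(Δ(fg)(x) − f(x)Δg(x) − g(x)Δf(x))`. -/
noncomputable def gam {V : Type*} [Fintype V] (w : V → V → ℝ) (f g : V → ℝ) (x : V) : ℝ :=
  (1 / 2) * (lap w (fun y => f y * g y) x - f x * lap w g x - g x * lap w f x)

/-- The curvature operator `Γ₂(f,g)(x) = (1/2)(ΔΓ(f,g)(x) − Γ(f,Δg)(x) − Γ(g,Δf)(x))`. -/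
noncomputable def gam2 {V : Type*} [Fintype V] (w : V → V → ℝ) (f g : V → ℝ) (x : V) : ℝ :=
  (1 / 2) * (lap w (gam w f g) x - gam w f (lap w g) x - gam w g (lap w f) x)

/-- The gradient square `|∇f|²(x) = (1/d(x)) Σ_y w(x,y) (f(x) − f(y))²`. -/
noncomputable def gradsq {V : Type*} [Fintype V] (w : V → V → ℝ) (f : V → ℝ) (x : V) : ℝ :=
  (1 / deg w x) * ∑ y, w x y * (f x - f y) ^ 2

/-- The curvature-dimension inequality `CD(m,κ)`. -/
def CD {V : Type*} [Fintype V] (w : V → V → ℝ) (m κ : ℝ) : Prop :=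
  ∀ (f : V → ℝ) (x : V), gam2 w f f x ≥ (1 / m) * (lap w f x) ^ 2 + κ * gam w f f x

/-!
Summing `CD(m,κ)` against the degree measure gives Lichnerowicz's bound `κ ≤ (1 - 1/m) λ`.
Then apply the maximum principle to `F = |∇f|² + a f²` with `a = 4λ - λ/m - 3κ`: at a maximum
`x₀` of `F` we have `ΔF(x₀) ≤ 0`, while the Bochner identity `Δ|∇f|² = 4 Γ₂(f,f) - 2λ |∇f|²`
for the eigenfunction together with `CD(m,κ)` bounds `ΔF(x₀)` from below; this controls
`|∇f|²(x₀)` by `f(x₀)²`, and `|∇f|²(x) ≤ F(x₀)`.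
-/

section

variable {V : Type*} [Fintype V] (w : V → V → ℝ)

lemma lap_add (g h : V → ℝ) (x : V) :
    lap w (fun y => g y + h y) x = lap w g x + lap w h x := by
  simp only [lap, ← mul_add, ← sum_add_distrib]
  congr 1
  exact sum_congr rfl fun y _ => by ring

lemma lap_const_mul (c : ℝ) (g : V → ℝ) (x : V) :
    lap w (fun y => c * g y) x = c * lap w g x := by
  simp only [lap, mul_sum]
  exact sum_congr rfl fun y _ => by ring

lemma lap_sq (f : V → ℝ) (x : V) :
    lap w (fun y => f y ^ 2) x = gradsq w f x + 2 * f x * lap w f x := by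
  simp only [lap, gradsq, mul_sum]
  rw [← sum_add_distrib]
  exact sum_congr rfl fun y _ => by ring

lemma gam_self (f : V → ℝ) (x : V) : gam w f f x = gradsq w f x / 2 := by
  have h := lap_sq w f x
  simp only [sq] at h
  simp only [gam, h]
  ring

lemma gam_const_mul_right (f h : V → ℝ) (c : ℝ) (x : V) :
    gam w f (fun y => c * h y) x = c * gam w f h x := by
  have hfh : (fun y => f y * (c * h y)) = fun y => c * (f y * h y) := by
    funext y; ring
  simp only [gam, hfh, lap_const_mul]
  ring

lemma deg_nonneg (hnonneg : ∀ x y, 0 ≤ w x y) (x : V) : 0 ≤ deg w x :=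
  sum_nonneg fun y _ => hnonneg x y

lemma lap_nonpos_at_max (hnonneg : ∀ x y, 0 ≤ w x y) {F : V → ℝ} {x₀ : V}
    (hmax : ∀ y, F y ≤ F x₀) : lap w F x₀ ≤ 0 :=
  mul_nonpos_of_nonneg_of_nonpos (one_div_nonneg.2 (deg_nonneg w hnonneg x₀))
    (sum_nonpos fun y _ => mul_nonpos_of_nonneg_of_nonpos (hnonneg x₀ y)
      (sub_nonpos.2 (hmax y)))

lemma sum_deg_mul_lap (hsymm : ∀ x y, w x y = w y x) (hdeg : ∀ x, deg w x ≠ 0)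
    (g : V → ℝ) : ∑ x, deg w x * lap w g x = 0 := by
  set S := ∑ x, ∑ y, w x y * (g y - g x)
  have hS : ∑ x, deg w x * lap w g x = S := by
    refine sum_congr rfl fun x _ => ?_
    rw [lap, ← mul_assoc, mul_one_div_cancel (hdeg x), one_mul]
  have hanti : S = -S := by
    calc S = ∑ x, ∑ y, w y x * (g x - g y) := sum_comm
      _ = -S := by
        simp only [S, ← sum_neg_distrib]
        exact sum_congr rfl fun x _ => sum_congr rfl fun y _ => by rw [hsymm]; ring
  rw [hS]
  linarith

section Eigenfunction

variable {w} {f : V → ℝ} {lam : ℝ} (hf : ∀ y, lap w f y = -lam * f y)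
include hf

lemma gam2_self_of_eigen (x : V) :
    gam2 w f f x = lap w (gam w f f) x / 2 + lam * gam w f f x := by
  rw [gam2, show lap w f = fun y => -lam * f y from funext hf, gam_const_mul_right]
  ring

lemma lap_gradsq_of_eigen (x : V) :
    lap w (gradsq w f) x = 4 * gam2 w f f x - 2 * lam * gradsq w f x := by
  have hgrad : gradsq w f = fun y => 2 * gam w f f y := by
    funext y; rw [gam_self]; ring
  rw [gam2_self_of_eigen hf, gam_self, hgrad, lap_const_mul]
  ring

lemma CD.lap_gradsq_ge_of_eigen {m κ : ℝ} (hCD : CD w m κ) (x : V) :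
    4 / m * lam ^ 2 * f x ^ 2 + (2 * κ - 2 * lam) * gradsq w f x ≤ lap w (gradsq w f) x := by
  have h := hCD f x
  rw [hf, gam_self, mul_pow, neg_sq] at h
  rw [lap_gradsq_of_eigen hf]
  have e : 4 / m * lam ^ 2 * f x ^ 2 = 4 * (1 / m * (lam ^ 2 * f x ^ 2)) := by ring
  linarith

lemma sum_deg_mul_gam_self_of_eigen (hsymm : ∀ x y, w x y = w y x) (hdeg : ∀ x, deg w x ≠ 0) :
    ∑ x, deg w x * gam w f f x = lam * ∑ x, deg w x * f x ^ 2 := by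
  have h := sum_deg_mul_lap w hsymm hdeg fun y => f y * f y
  calc ∑ x, deg w x * gam w f f x
      = (∑ x, deg w x * lap w (fun y => f y * f y) x) / 2 + lam * ∑ x, deg w x * f x ^ 2 := by
        rw [sum_div, mul_sum, ← sum_add_distrib]
        exact sum_congr rfl fun x _ => by rw [gam, hf]; ring
    _ = lam * ∑ x, deg w x * f x ^ 2 := by rw [h]; ring

lemma sum_deg_mul_gam2_self_of_eigen (hsymm : ∀ x y, w x y = w y x)
    (hdeg : ∀ x, deg w x ≠ 0) :
    ∑ x, deg w x * gam2 w f f x = lam ^ 2 * ∑ x, deg w x * f x ^ 2 := by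
  have h := sum_deg_mul_lap w hsymm hdeg (gam w f f)
  have hgam := sum_deg_mul_gam_self_of_eigen hf hsymm hdeg
  calc ∑ x, deg w x * gam2 w f f x
      = (∑ x, deg w x * lap w (gam w f f) x) / 2 + lam * ∑ x, deg w x * gam w f f x := by
        rw [sum_div, mul_sum, ← sum_add_distrib]
        exact sum_congr rfl fun x _ => by rw [gam2_self_of_eigen hf]; ring
    _ = lam ^ 2 * ∑ x, deg w x * f x ^ 2 := by rw [h, hgam]; ring

/-- Lichnerowicz's eigenvalue estimate, from `CD(m,κ)` summed against `deg`. -/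
lemma CD.curvature_le_of_eigen (hsymm : ∀ x y, w x y = w y x) (hdeg : ∀ x, 0 < deg w x)
    {m κ : ℝ} (hCD : CD w m κ) (hlam : 0 < lam) (hf0 : ∃ z, f z ≠ 0) :
    κ ≤ lam - lam / m := by
  have hdeg' : ∀ x, deg w x ≠ 0 := fun x => (hdeg x).ne'
  set S := ∑ x, deg w x * f x ^ 2
  have hS : 0 < S := by
    obtain ⟨z, hz⟩ := hf0
    exact sum_pos' (fun x _ => mul_nonneg (hdeg x).le (sq_nonneg _))
      ⟨z, mem_univ z, mul_pos (hdeg z) (by positivity)⟩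
  have hsum : lam ^ 2 / m * S + κ * (lam * S) ≤ lam ^ 2 * S := by
    rw [← sum_deg_mul_gam2_self_of_eigen hf hsymm hdeg',
      ← sum_deg_mul_gam_self_of_eigen hf hsymm hdeg', mul_sum, mul_sum, ← sum_add_distrib]
    refine sum_le_sum fun x _ => ?_
    calc lam ^ 2 / m * (deg w x * f x ^ 2) + κ * (deg w x * gam w f f x)
        = deg w x * (1 / m * lap w f x ^ 2 + κ * gam w f f x) := by rw [hf]; ring
      _ ≤ deg w x * gam2 w f f x := mul_le_mul_of_nonneg_left (hCD f x) (hdeg x).le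
  have key : 0 ≤ (lam - lam / m - κ) * (lam * S) := by
    have e : (lam - lam / m - κ) * (lam * S) = lam ^ 2 * S - (lam ^ 2 / m * S + κ * (lam * S)) := by
      ring
    linarith
  linarith [nonneg_of_mul_nonneg_left key (mul_pos hlam hS)]

lemma CD.gradsq_le_at_max {m κ : ℝ} (hCD : CD w m κ) (hnonneg : ∀ x y, 0 ≤ w x y) (a : ℝ)
    {x₀ : V} (hmax : ∀ y, gradsq w f y + a * f y ^ 2 ≤ gradsq w f x₀ + a * f x₀ ^ 2) :
    (a + 2 * κ - 2 * lam) * gradsq w f x₀ ≤ 2 * lam * (a - 2 * (lam / m)) * f x₀ ^ 2 := by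
  have hlap := lap_nonpos_at_max w hnonneg hmax
  have hbochner := hCD.lap_gradsq_ge_of_eigen hf x₀
  rw [lap_add, lap_const_mul, lap_sq, hf] at hlap
  have e : 4 / m * lam ^ 2 * f x₀ ^ 2 = 4 * lam * (lam / m) * f x₀ ^ 2 := by ring
  linarith

end Eigenfunction

end

theorem harnack_inequality_general {V : Type*} [Fintype V] (w : V → V → ℝ)
    (hsymm : ∀ x y, w x y = w y x) (hnonneg : ∀ x y, 0 ≤ w x y)
    (hdeg : ∀ x, 0 < deg w x)
    (m κ : ℝ) (hm : 0 < m) (hCD : CD w m κ)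
    (lam : ℝ) (hlam : 0 < lam) (f : V → ℝ) (hf : ∀ x, -lap w f x = lam * f x)
    (hnc : ∃ x y, f x ≠ f y) (x : V) :
    gradsq w f x ≤ ((8 - 2 / m) * lam - 4 * κ) * ⨆ z, f z ^ 2 := by
  have hf' : ∀ y, lap w f y = -lam * f y := fun y => by linarith [hf y]
  have hf0 : ∃ z, f z ≠ 0 := by
    obtain ⟨a, b, hab⟩ := hnc
    by_contra! h
    exact hab (by rw [h a, h b])
  have hκ := hCD.curvature_le_of_eigen hf' hsymm hdeg hlam hf0
  rw [show (8 - 2 / m) * lam - 4 * κ = 8 * lam - 2 * (lam / m) - 4 * κ by ring]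
  set μ := lam / m
  have hμ : 0 < μ := div_pos hlam hm
  -- The weight `a = 4λ - μ - 3κ` and the multiplier `t = 2λ - μ - κ` are chosen so that
  -- `t * (8λ - 2μ - 4κ) - (2λ(a - 2μ) + t * a) = (μ + κ)²`.
  obtain ⟨x₀, -, hx₀⟩ := exists_max_image univ
    (fun z => gradsq w f z + (4 * lam - μ - 3 * κ) * f z ^ 2) ⟨x, mem_univ x⟩
  have hmax := hCD.gradsq_le_at_max hf' hnonneg _ fun y => hx₀ y (mem_univ y)
  have ha : 0 ≤ 4 * lam - μ - 3 * κ := by linarith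
  have hx : gradsq w f x ≤ gradsq w f x₀ + (4 * lam - μ - 3 * κ) * f x₀ ^ 2 := by
    linarith [hx₀ x (mem_univ x), mul_nonneg ha (sq_nonneg (f x))]
  have hM : f x₀ ^ 2 ≤ ⨆ z, f z ^ 2 := le_ciSup (Set.finite_range fun z => f z ^ 2).bddAbove x₀
  have ht : 0 < 2 * lam - μ - κ := by linarith
  refine le_of_mul_le_mul_left ?_ ht
  calc (2 * lam - μ - κ) * gradsq w f x
      ≤ (2 * lam - μ - κ) * (gradsq w f x₀ + (4 * lam - μ - 3 * κ) * f x₀ ^ 2) :=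
        mul_le_mul_of_nonneg_left hx ht.le
    _ ≤ ((2 * lam - μ - κ) * (8 * lam - 2 * μ - 4 * κ) - (μ + κ) ^ 2) * f x₀ ^ 2 := by
        linarith
    _ ≤ (2 * lam - μ - κ) * ((8 * lam - 2 * μ - 4 * κ) * f x₀ ^ 2) := by
        linarith [mul_nonneg (sq_nonneg (μ + κ)) (sq_nonneg (f x₀))]
    _ ≤ (2 * lam - μ - κ) * ((8 * lam - 2 * μ - 4 * κ) * ⨆ z, f z ^ 2) :=
        mul_le_mul_of_nonneg_left (mul_le_mul_of_nonneg_left hM (by linarith)) ht.le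

theorem harnack_inequality {V : Type*} [Fintype V] (w : V → V → ℝ)
    (hsymm : ∀ x y, w x y = w y x) (hnonneg : ∀ x y, 0 ≤ w x y)
    (hloop : ∀ x, w x x = 0) (hdeg : ∀ x, 0 < deg w x)
    (hconn : (SimpleGraph.fromRel fun x y => 0 < w x y).Connected)
    (m κ : ℝ) (hm : 0 < m) (hCD : CD w m κ)
    (lam : ℝ) (hlam : 0 < lam) (f : V → ℝ) (hf : ∀ x, -lap w f x = lam * f x)
    (hnc : ∃ x y, f x ≠ f y) (x : V) :
    gradsq w f x ≤ ((8 - 2 / m) * lam - 4 * κ) * ⨆ z, f z ^ 2 :=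
  harnack_inequality_general w hsymm hnonneg hdeg m κ hm hCD lam hlam f hf hnc x
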